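/- For every ε > 0 and every sequence k = k(n) with 1 ≤ k(n) ≤ 2^{n/2}, almost all functions f in P_{k(n)}^n satisfy |Θ_f| ≥ (1 − ε)·n·k, where Θ_f = {y : f y = true and y is at Hamming distance 1 from some zero of f} is the set of near-zero points of f. -/

import Mathlib

open scoped Classical

/-- A conjunction (term) over `n` Boolean variables: a support set `supp ⊆ Fin n`
together with a sign assignment `sgn` (only its values on `supp` matter). -/
structure Conj (n : ℕ) where
  supp : Finset (Fin n)
  sgn : Fin n → Bool

/-- The rank of a conjunction: the number of literals, i.e. `|supp|`. -/
def Conj.rank {n : ℕ} (K : Conj n) : ℕ := K.supp.card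

/-- A conjunction covers a point `x` if `x` agrees with the sign assignment on the support. -/
def Conj.covers {n : ℕ} (K : Conj n) (x : Fin n → Bool) : Prop :=
  ∀ i ∈ K.supp, x i = K.sgn i

/-- `K` is an implicant of `f` if every point covered by `K` is a one of `f`. -/
def Implicant {n : ℕ} (K : Conj n) (f : (Fin n → Bool) → Bool) : Prop :=
  ∀ x, K.covers x → f x = true

/-- `K` is a prime implicant of `f` if it is an implicant of `f` and deleting
any coordinate of its support yields a conjunction which is not an implicant of `f`. -/
def PrimeImplicant {n : ℕ} (K : Conj n) (f : (Fin n → Bool) → Bool) : Prop :=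
  Implicant K f ∧ ∀ i ∈ K.supp, ¬ Implicant ⟨K.supp.erase i, K.sgn⟩ f

/-- The number of zeros of a Boolean function on `n` variables. -/
def zerosCard {n : ℕ} (f : (Fin n → Bool) → Bool) : ℕ :=
  (Finset.univ.filter (fun x => f x = false)).card

/-- `P_k^n`: the (finite) class of Boolean functions on `n` variables with exactly `k` zeros. -/
def Pclass (n k : ℕ) : Finset ((Fin n → Bool) → Bool) :=
  Finset.univ.filter (fun f => zerosCard f = k)

/-- `D` is a DNF realization of `f`: `f x = true` iff some conjunction of `D` covers `x`. -/
def IsDNF {n : ℕ} (f : (Fin n → Bool) → Bool) (D : Finset (Conj n)) : Prop :=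
  ∀ x, f x = true ↔ ∃ K ∈ D, K.covers x

/-- The fraction of functions in `P_k^n` satisfying property `P`. -/
noncomputable def frac (n k : ℕ) (P : ((Fin n → Bool) → Bool) → Prop) : ℝ :=
  (((Pclass n k).filter P).card : ℝ) / ((Pclass n k).card : ℝ)


open Finset

/-!
A zero `z` of `f` with no other zero within distance 2 contributes its whole Hamming sphere of
radius 1 to `Θ_f`, and these spheres are pairwise disjoint; so `|Θ_f| ≥ n·(k - T f)`, where `T f`
counts the ordered pairs of distinct zeros at distance at most 2. Only `2^n n²` pairs of points are
that close, and a fixed pair consists of zeros of exactly a `k(k-1)/(2^n(2^n-1))` fraction of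
`P_k^n`, so `T` has average at most `n² k (k-1) / (2^n - 1)` on `P_k^n`. By Markov's inequality the
fraction of `f` with `T f > ε k` is at most `n² (k-1) / (ε (2^n - 1)) ≤ n² 2^{-n/2} / ε` when
`k ≤ 2^{n/2}`, which tends to `0`.
-/

section HammingCube

variable {ι : Type*} [Fintype ι] [DecidableEq ι]

lemma hammingDist_update_not (x : ι → Bool) (i : ι) :
    hammingDist x (Function.update x i (!x i)) = 1 := by
  rw [hammingDist, card_eq_one]
  refine ⟨i, eq_singleton_iff_unique_mem.mpr ⟨by simp, fun j hj => ?_⟩⟩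
  by_contra hji
  simp [Function.update_of_ne hji] at hj

lemma card_le_card_hammingDist_eq_one (x : ι → Bool) :
    Fintype.card ι ≤ #{y | hammingDist x y = 1} := by
  refine card_le_card_of_injOn (fun i => Function.update x i (!x i)) (s := univ)
    (fun i _ => by simp [hammingDist_update_not]) (fun i _ j _ hij => ?_)
  by_contra hne
  simpa [Function.update_of_ne hne] using congrFun hij i

/-- A point at distance 1 or 2 from `x` is determined by the set `{i, j}` of coordinates where it
differs from `x`. -/
lemma card_hammingDist_le_two_le (x : ι → Bool) :
    #{y | x ≠ y ∧ hammingDist x y ≤ 2} ≤ Fintype.card ι ^ 2 := by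
  have hdiff : ∀ y, x ≠ y → hammingDist x y ≤ 2 →
      ∃ p : ι × ι, ({p.1, p.2} : Finset ι) = ({i | x i ≠ y i} : Finset ι) := by
    intro y hne hle
    rcases (by have := hammingDist_pos.mpr hne; omega :
        hammingDist x y = 1 ∨ hammingDist x y = 2) with h | h
    · obtain ⟨i, hi⟩ := card_eq_one.mp h
      exact ⟨(i, i), by simpa using hi.symm⟩
    · obtain ⟨i, j, -, hij⟩ := card_eq_two.mp h
      exact ⟨(i, j), hij.symm⟩
  calc #{y | x ≠ y ∧ hammingDist x y ≤ 2}
      ≤ #((univ : Finset (ι × ι)).image fun p => ({p.1, p.2} : Finset ι)) := by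
        refine card_le_card_of_injOn (fun y => ({i | x i ≠ y i} : Finset ι)) (fun y hy => ?_)
          (fun y _ y' _ h => funext fun i => ?_)
        · obtain ⟨hne, hle⟩ := (mem_filter.mp hy).2
          obtain ⟨p, hp⟩ := hdiff y hne hle
          exact mem_image.mpr ⟨p, mem_univ _, hp⟩
        · have := Finset.ext_iff.mp h i
          simp only [mem_filter, mem_univ, true_and] at this
          cases hx : x i <;> cases hy : y i <;> cases hy' : y' i <;> simp_all
    _ ≤ Fintype.card ι ^ 2 := by
        simpa [sq] using card_image_le (s := (univ : Finset (ι × ι)))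

/-- The set `Θ_f`. -/
noncomputable def nearZeros (f : (ι → Bool) → Bool) : Finset (ι → Bool) :=
  {y | f y = true ∧ ∃ z, f z = false ∧ hammingDist y z = 1}

noncomputable def isolatedZeros (f : (ι → Bool) → Bool) : Finset (ι → Bool) :=
  {z | f z = false ∧ ∀ z', z' ≠ z → hammingDist z z' ≤ 2 → f z' = true}

variable (ι) in
noncomputable def closePairs : Finset ((ι → Bool) × (ι → Bool)) :=
  {p | p.1 ≠ p.2 ∧ hammingDist p.1 p.2 ≤ 2}

noncomputable def closeZeroPairs (f : (ι → Bool) → Bool) : Finset ((ι → Bool) × (ι → Bool)) :=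
  {p ∈ closePairs ι | f p.1 = false ∧ f p.2 = false}

lemma card_closePairs_le : #(closePairs ι) ≤ 2 ^ Fintype.card ι * Fintype.card ι ^ 2 := by
  rw [closePairs, card_filter, Fintype.sum_prod_type]
  simp_rw [← card_filter]
  calc ∑ x : ι → Bool, #{y | x ≠ y ∧ hammingDist x y ≤ 2}
      ≤ ∑ _x : ι → Bool, Fintype.card ι ^ 2 := sum_le_sum fun x _ => card_hammingDist_le_two_le x
    _ = 2 ^ Fintype.card ι * Fintype.card ι ^ 2 := by simp

/-- Each isolated zero has all its neighbours in `Θ_f`, and no point is adjacent to two isolated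
zeros. -/
lemma card_mul_card_isolatedZeros_le (f : (ι → Bool) → Bool) :
    #(isolatedZeros f) * Fintype.card ι ≤ #(nearZeros f) := by
  refine (card_mul_le_card_mul (n := 1) (fun z y => hammingDist z y = 1) (fun z hz => ?_)
    (fun y _ => ?_)).trans_eq (mul_one _)
  · simp only [isolatedZeros, mem_filter, mem_univ, true_and] at hz
    refine (card_le_card_hammingDist_eq_one z).trans (card_le_card fun y hy => ?_)
    have hy : hammingDist z y = 1 := (mem_filter.mp hy).2
    have hyz : y ≠ z := by rintro rfl; simp at hy
    simp only [bipartiteAbove, nearZeros, mem_filter, mem_univ, true_and]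
    exact ⟨⟨hz.2 y hyz (by omega), z, hz.1, by rwa [hammingDist_comm]⟩, hy⟩
  · refine card_le_one.mpr fun z₁ hz₁ z₂ hz₂ => ?_
    simp only [bipartiteBelow, isolatedZeros, mem_filter, mem_univ, true_and] at hz₁ hz₂
    by_contra hne
    have hdist : hammingDist z₁ z₂ ≤ 2 := by
      have := hammingDist_triangle z₁ y z₂
      rw [hz₁.2, hammingDist_comm y z₂, hz₂.2] at this
      exact this
    simpa [hz₂.1.1] using hz₁.1.2 z₂ (Ne.symm hne) hdist

lemma card_zeros_le (f : (ι → Bool) → Bool) :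
    #{z | f z = false} ≤ #(isolatedZeros f) + #(closeZeroPairs f) := by
  calc #{z | f z = false} ≤ #(isolatedZeros f ∪ (closeZeroPairs f).image Prod.fst) := by
        refine card_le_card fun z hz => ?_
        have hz : f z = false := (mem_filter.mp hz).2
        by_cases hiso : z ∈ isolatedZeros f
        · exact mem_union_left _ hiso
        · simp only [isolatedZeros, mem_filter, mem_univ, true_and, hz, not_forall,
            Bool.not_eq_true, exists_prop, true_and] at hiso
          obtain ⟨z', hne, hdist, hz'⟩ := hiso
          refine mem_union_right _ (mem_image.mpr ⟨(z, z'), ?_, rfl⟩)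
          simp [closeZeroPairs, closePairs, hz, hz', Ne.symm hne, hdist]
    _ ≤ #(isolatedZeros f) + #(closeZeroPairs f) :=
        (card_union_le _ _).trans (Nat.add_le_add_left card_image_le _)

lemma card_mul_card_zeros_le (f : (ι → Bool) → Bool) :
    Fintype.card ι * #{z | f z = false} ≤
      #(nearZeros f) + Fintype.card ι * #(closeZeroPairs f) := by
  have := card_mul_card_isolatedZeros_le f
  have := Nat.mul_le_mul_left (Fintype.card ι) (card_zeros_le f)
  nlinarith

end HammingCube

lemma card_filter_powersetCard_subset_mul {α : Type*} [DecidableEq α] {s t : Finset α}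
    (hst : s ⊆ t) (k : ℕ) :
    #{S ∈ t.powersetCard k | s ⊆ S} * (#t).choose #s = (#t).choose k * k.choose #s := by
  rcases le_or_gt #s k with hsk | hks
  · rw [card_filter_powersetCard_subset s t k hst hsk, Nat.choose_mul hsk, mul_comm]
  · have : #{S ∈ t.powersetCard k | s ⊆ S} = 0 := by
      refine card_eq_zero.mpr (filter_eq_empty_iff.mpr fun S hS hsS => ?_)
      have := card_le_card hsS
      rw [(mem_powersetCard.mp hS).2] at this
      omega
    rw [this, Nat.choose_eq_zero_of_lt hks]; simp

lemma Pclass_eq_image (n k : ℕ) :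
    Pclass n k = (univ.powersetCard k).image fun S x => decide (x ∉ S) := by
  ext f
  rw [Pclass, mem_filter, zerosCard]
  simp only [mem_univ, true_and, mem_image, mem_powersetCard, subset_univ]
  constructor
  · intro hk
    exact ⟨_, hk, funext fun x => by cases hx : f x <;> simp [hx]⟩
  · rintro ⟨S, hS, rfl⟩
    simpa using hS

lemma injective_decide_not_mem {α : Type*} [DecidableEq α] :
    Function.Injective fun (S : Finset α) (x : α) => decide (x ∉ S) := fun S T h =>
  Finset.ext fun x => by simpa using congrFun h x

lemma card_Pclass (n k : ℕ) : #(Pclass n k) = (2 ^ n).choose k := by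
  rw [Pclass_eq_image, card_image_of_injective _ injective_decide_not_mem, card_powersetCard]
  simp

lemma card_filter_Pclass_eq_false_mul {n : ℕ} (k : ℕ) {u v : Fin n → Bool} (huv : u ≠ v) :
    #{f ∈ Pclass n k | f u = false ∧ f v = false} * (2 ^ n).choose 2 =
      (2 ^ n).choose k * k.choose 2 := by
  have h := card_filter_powersetCard_subset_mul (subset_univ {u, v}) k
  rw [card_pair_eq_two_iff.mpr huv, card_univ, Fintype.card_fun, Fintype.card_bool,
    Fintype.card_fin] at h
  rw [← h, Pclass_eq_image, filter_image, card_image_of_injective _ injective_decide_not_mem]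
  congr 3
  ext S
  simp [insert_subset_iff]

lemma sum_card_closeZeroPairs_mul_le (n k : ℕ) :
    (∑ f ∈ Pclass n k, #(closeZeroPairs f)) * (2 ^ n).choose 2 ≤
      2 ^ n * n ^ 2 * ((2 ^ n).choose k * k.choose 2) := by
  have hswap : ∑ f ∈ Pclass n k, #(closeZeroPairs f) =
      ∑ p ∈ closePairs (Fin n), #{f ∈ Pclass n k | f p.1 = false ∧ f p.2 = false} :=
    sum_card_bipartiteAbove_eq_sum_card_bipartiteBelow
      (fun (f : (Fin n → Bool) → Bool) (p : (Fin n → Bool) × (Fin n → Bool)) =>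
        f p.1 = false ∧ f p.2 = false)
  rw [hswap, sum_mul]
  calc ∑ p ∈ closePairs (Fin n), #{f ∈ Pclass n k | f p.1 = false ∧ f p.2 = false} *
        (2 ^ n).choose 2
      = ∑ _p ∈ closePairs (Fin n), (2 ^ n).choose k * k.choose 2 :=
        sum_congr rfl fun p hp => card_filter_Pclass_eq_false_mul k (mem_filter.mp hp).2.1
    _ ≤ 2 ^ n * n ^ 2 * ((2 ^ n).choose k * k.choose 2) := by
        rw [sum_const, smul_eq_mul]
        simpa using Nat.mul_le_mul_right _ (card_closePairs_le (ι := Fin n))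

section Markov

variable {n k : ℕ} {ε : ℝ}

lemma lt_card_closeZeroPairs (hn : 0 < n) {f : (Fin n → Bool) → Bool} (hf : zerosCard f = k)
    (hbad : ¬ (1 - ε) * n * k ≤ #(nearZeros f)) : ε * k < #(closeZeroPairs f) := by
  have h : (n * k : ℝ) ≤ #(nearZeros f) + n * #(closeZeroPairs f) := by
    have : n * zerosCard f ≤ #(nearZeros f) + n * #(closeZeroPairs f) := by
      have := card_mul_card_zeros_le f
      rwa [Fintype.card_fin] at this
    exact_mod_cast hf ▸ this
  have hn' : (0 : ℝ) < n := by exact_mod_cast hn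
  refine lt_of_mul_lt_mul_left ?_ hn'.le
  linarith [not_le.mp hbad]

lemma card_mul_le_of_lt_card_closeZeroPairs (hk : 1 ≤ k) {B : Finset ((Fin n → Bool) → Bool)}
    (hB : B ⊆ Pclass n k) (hT : ∀ f ∈ B, ε * k < #(closeZeroPairs f)) :
    #B * (ε * (2 ^ n - 1)) ≤ n ^ 2 * (k - 1) * #(Pclass n k) := by
  have hmarkov : #B * (ε * k) ≤ ∑ f ∈ Pclass n k, (#(closeZeroPairs f) : ℝ) := by
    calc #B * (ε * k) ≤ ∑ f ∈ B, (#(closeZeroPairs f) : ℝ) := by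
          simpa using card_nsmul_le_sum B _ _ fun f hf => (hT f hf).le
      _ ≤ ∑ f ∈ Pclass n k, (#(closeZeroPairs f) : ℝ) :=
          sum_le_sum_of_subset_of_nonneg hB fun _ _ _ => by positivity
  have hsum : (∑ f ∈ Pclass n k, (#(closeZeroPairs f) : ℝ)) * (2 ^ n * (2 ^ n - 1) / 2) ≤
      2 ^ n * n ^ 2 * (#(Pclass n k) * (k * (k - 1) / 2)) := by
    have := sum_card_closeZeroPairs_mul_le n k
    rw [← card_Pclass n k] at this
    have := (Nat.cast_le (α := ℝ)).mpr this
    push_cast [Nat.cast_choose_two] at this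
    exact this
  have hkN : (0 : ℝ) < k * 2 ^ n / 2 := by
    have : (1 : ℝ) ≤ k := by exact_mod_cast hk
    positivity
  have hN : (0 : ℝ) ≤ 2 ^ n * (2 ^ n - 1) / 2 := by
    have : (1 : ℝ) ≤ 2 ^ n := one_le_pow₀ one_le_two
    positivity
  refine le_of_mul_le_mul_left ?_ hkN
  calc k * 2 ^ n / 2 * (#B * (ε * (2 ^ n - 1)))
      = #B * (ε * k) * (2 ^ n * (2 ^ n - 1) / 2) := by ring
    _ ≤ (∑ f ∈ Pclass n k, (#(closeZeroPairs f) : ℝ)) * (2 ^ n * (2 ^ n - 1) / 2) :=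
        mul_le_mul_of_nonneg_right hmarkov hN
    _ ≤ 2 ^ n * n ^ 2 * (#(Pclass n k) * (k * (k - 1) / 2)) := hsum
    _ = k * 2 ^ n / 2 * (n ^ 2 * (k - 1) * #(Pclass n k)) := by ring

lemma frac_mul_le (hn : 0 < n) (hk : 1 ≤ k) :
    frac n k (fun f => ¬ (1 - ε) * n * k ≤ #(nearZeros f)) * (ε * (2 ^ n - 1)) ≤
      n ^ 2 * (k - 1) := by
  rw [frac]
  rcases (Nat.cast_nonneg #(Pclass n k) : (0 : ℝ) ≤ _).eq_or_lt with hC | hC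
  · rw [← hC, div_zero, zero_mul]
    have : (1 : ℝ) ≤ k := by exact_mod_cast hk
    positivity
  rw [div_mul_eq_mul_div, div_le_iff₀ hC]
  refine card_mul_le_of_lt_card_closeZeroPairs hk (fun f hf => ?_) fun f hf => ?_ <;>
    simp only [Pclass, mem_filter, mem_univ, true_and] at hf ⊢
  exacts [hf.1, lt_card_closeZeroPairs hn hf.1 hf.2]

lemma frac_le (hε : 0 < ε) (hn : 0 < n) (hk1 : 1 ≤ k)
    (hk2 : (k : ℝ) ≤ √2 ^ n) :
    frac n k (fun f => ¬ (1 - ε) * n * k ≤ #(nearZeros f)) ≤ n ^ 2 * (√2)⁻¹ ^ n / ε := by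
  set x := √2 ^ n
  have hx : 1 < x := one_lt_pow₀ (by simp [Real.lt_sqrt]) hn.ne'
  have hx2 : (2 : ℝ) ^ n = x ^ 2 := by rw [← pow_mul, mul_comm, pow_mul, Real.sq_sqrt zero_le_two]
  have hfrac := frac_mul_le (ε := ε) hn hk1
  have hfrac0 : 0 ≤ frac n k (fun f => ¬ (1 - ε) * n * k ≤ #(nearZeros f)) := by
    rw [frac]; positivity
  rw [hx2] at hfrac
  -- `(k - 1) / (x² - 1) ≤ (x - 1) / (x² - 1) = 1 / (x + 1)`
  have : frac n k (fun f => ¬ (1 - ε) * n * k ≤ #(nearZeros f)) * ε * x ≤ n ^ 2 := by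
    nlinarith [mul_nonneg hfrac0 hε.le, sq_nonneg (n : ℝ)]
  rw [inv_pow, le_div_iff₀ hε, ← div_eq_mul_inv, le_div_iff₀ (by positivity)]
  linarith

end Markov

/-- For every `ε > 0` and every sequence `k(n)` with `1 ≤ k(n) ≤ 2^(n/2)`,
almost all functions `f ∈ P_{k(n)}^n` satisfy `|Θ_f| ≥ (1 − ε)·n·k`, where `Θ_f` is the set
of near-zero points of `f`. -/
theorem stmt13 (ε : ℝ) (hε : 0 < ε) (k : ℕ → ℕ)
    (hk1 : ∀ n, 1 ≤ k n) (hk2 : ∀ n, (k n : ℝ) ≤ 2 ^ ((n : ℝ) / 2)) :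
    Filter.Tendsto
      (fun n =>
        frac n (k n) (fun f =>
          ¬ ((1 - ε) * (n : ℝ) * (k n) ≤
            ((Finset.univ.filter
                (fun y : Fin n → Bool =>
                  f y = true ∧
                    ∃ z : Fin n → Bool, f z = false ∧ hammingDist y z = 1)).card : ℝ))))
      Filter.atTop (nhds 0) := by
  have hsqrt (n : ℕ) : (2 : ℝ) ^ ((n : ℝ) / 2) = √2 ^ n := by
    rw [Real.sqrt_eq_rpow, ← Real.rpow_natCast, ← Real.rpow_mul zero_le_two]
    ring_nf
  have hlim : Filter.Tendsto (fun n : ℕ => n ^ 2 * (√2)⁻¹ ^ n / ε) Filter.atTop (nhds 0) := by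
    have hr : |(√2)⁻¹| < 1 := by
      rw [abs_of_pos (by positivity)]
      exact inv_lt_one_of_one_lt₀ (by simp [Real.lt_sqrt])
    simpa using (tendsto_pow_const_mul_const_pow_of_abs_lt_one 2 hr).div_const ε
  refine squeeze_zero' (Filter.Eventually.of_forall fun n => ?_) ?_ hlim
  · rw [frac]; positivity
  · filter_upwards [Filter.eventually_gt_atTop 0] with n hn
    exact frac_le hε hn (hk1 n) (hsqrt n ▸ hk2 n)
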